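/- Every doubly even self-dual binary linear code of length 8 is equivalent (i.e., equal after a permutation of coordinates) to the [8,4,4] Hamming code H₈. -/
import Mathlib


namespace Hamming8

/-- The Hamming weight of a vector over `F₂`. -/
def wt {n : ℕ} (v : Fin n → ZMod 2) : ℕ :=
  (Finset.univ.filter fun i => v i ≠ 0).card

def h1 : Fin 8 → ZMod 2 := fun _ => 1
def h2 : Fin 8 → ZMod 2 := fun i => if (i : ℕ) < 4 then 1 else 0
def h3 : Fin 8 → ZMod 2 := fun i => if (i : ℕ) % 4 < 2 then 1 else 0
def h4 : Fin 8 → ZMod 2 := fun i => if (i : ℕ) % 2 = 0 then 1 else 0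

/-- The `[8,4,4]` Hamming code `H₈ ⊆ F₂⁸`. -/
def H8 : Submodule (ZMod 2) (Fin 8 → ZMod 2) :=
  Submodule.span (ZMod 2) {h1, h2, h3, h4}

end Hamming8

open Hamming8

def Bf : LinearMap.BilinForm (ZMod 2) (Fin 8 → ZMod 2) :=
  LinearMap.mk₂ (ZMod 2) (fun x y => ∑ i, x i * y i)
    (fun x x' y => by simp [add_mul, Finset.sum_add_distrib])
    (fun a x y => by simp [Finset.mul_sum, mul_assoc])
    (fun x y y' => by simp [mul_add, Finset.sum_add_distrib])
    (fun a x y => by simp [Finset.mul_sum, mul_assoc, mul_left_comm])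

lemma Bf_apply (x y : Fin 8 → ZMod 2) : Bf x y = ∑ i, x i * y i := rfl

lemma Bf_refl : Bf.IsRefl := fun x y h => by
  simpa [Bf_apply, mul_comm] using h

lemma Bf_orth_top : Bf.orthogonal ⊤ = ⊥ := by
  ext x
  simp only [Submodule.mem_bot, LinearMap.BilinForm.mem_orthogonal_iff]
  constructor
  · intro h
    funext i
    have := h (Pi.single i 1) trivial
    simpa [LinearMap.BilinForm.IsOrtho, Bf_apply, Pi.single_apply, ite_mul] using this
  · rintro rfl y -
    simp [LinearMap.BilinForm.IsOrtho, Bf_apply]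

lemma sum_eq_wt {n : ℕ} (v : Fin n → ZMod 2) : ∑ i, v i = (wt v : ZMod 2) := by
  rw [← Finset.sum_filter_ne_zero, wt]
  rw [Finset.sum_congr rfl (fun i hi => show v i = 1 from
    (by decide : ∀ x : ZMod 2, x ≠ 0 → x = 1) _ (Finset.mem_filter.mp hi).2)]
  simp


/-- Every doubly even self-dual binary linear code of length `8` is equivalent,
i.e. equal after a permutation of coordinates, to the Hamming code `H₈`. -/
theorem stmt8 (C : Submodule (ZMod 2) (Fin 8 → ZMod 2))
    (hsd : ∀ β : Fin 8 → ZMod 2, β ∈ C ↔ ∀ α ∈ C, ∑ i, α i * β i = 0)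
    (hde : ∀ c ∈ C, 4 ∣ wt c) :
    ∃ π : Equiv.Perm (Fin 8),
      C.map (LinearMap.funLeft (ZMod 2) (ZMod 2) ⇑π) = H8 := by
  classical
  -- C is its own orthogonal complement
  have hC_orth : C = Bf.orthogonal C := by
    ext β
    rw [hsd]
    simp only [LinearMap.BilinForm.mem_orthogonal_iff, LinearMap.BilinForm.IsOrtho, Bf_apply]
  -- finrank C = 4
  have h8 : Module.finrank (ZMod 2) (Fin 8 → ZMod 2) = 8 := by
    simp
  have hfr : Module.finrank (ZMod 2) C = 4 := by
    have := LinearMap.BilinForm.finrank_add_finrank_orthogonal Bf_refl C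
    rw [← hC_orth, Bf_orth_top, inf_bot_eq, finrank_bot, h8] at this
    omega
  -- all-ones vector is in C
  have h1C : h1 ∈ C := by
    rw [hsd]
    intro α hα
    have : ∑ i, α i * h1 i = ∑ i, α i := by simp [h1]
    rw [this, sum_eq_wt]
    obtain ⟨k, hk⟩ := hde α hα
    rw [hk]
    push_cast
    rw [show ((4 : ZMod 2)) = 0 by decide]
    ring
  -- picking elements outside small spans
  have pick : ∀ s : Finset (Fin 8 → ZMod 2), s.card < 4 →
      ∃ c ∈ C, c ∉ Submodule.span (ZMod 2) (s : Set (Fin 8 → ZMod 2)) := by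
    intro s hcard
    by_contra h
    push_neg at h
    have hle : C ≤ Submodule.span (ZMod 2) (s : Set (Fin 8 → ZMod 2)) := fun x hx => h x hx
    have h2' := (Submodule.finrank_mono hle).trans (finrank_span_finset_le_card s)
    omega
  obtain ⟨c2, hc2C, hc2⟩ := pick {h1} (by simp)
  obtain ⟨c3, hc3C, hc3⟩ := pick {h1, c2} (by
    have := Finset.card_insert_le h1 ({c2} : Finset _); simp at this; omega)
  obtain ⟨c4, hc4C, hc4⟩ := pick {h1, c2, c3} (by
    have h1' := Finset.card_insert_le h1 ({c2, c3} : Finset _)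
    have h2' := Finset.card_insert_le c2 ({c3} : Finset _)
    simp at h1' h2'; omega)
  simp only [Finset.coe_insert, Finset.coe_singleton] at hc2 hc3 hc4
  -- span of the four equals C
  set S : Set (Fin 8 → ZMod 2) := {h1, c2, c3, c4} with hS
  have hSsubC : Submodule.span (ZMod 2) S ≤ C := by
    rw [Submodule.span_le]
    rintro x (rfl | rfl | rfl | rfl) <;> assumption
  have hspan : Submodule.span (ZMod 2) S = C := by
    refine Submodule.eq_of_le_of_finrank_le hSsubC ?_
    rw [hfr]
    -- strict chain of spans
    have h1ne : h1 ≠ 0 := fun h => one_ne_zero (congrFun h 0)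
    have r1 : Module.finrank (ZMod 2) (Submodule.span (ZMod 2) {h1}) = 1 :=
      finrank_span_singleton h1ne
    have l12 : Submodule.span (ZMod 2) {h1} < Submodule.span (ZMod 2) {h1, c2} := by
      refine lt_of_le_of_ne (Submodule.span_mono ?_) fun h => hc2 ?_
      · intro x hx; simp at hx ⊢; tauto
      · rw [h]; exact Submodule.subset_span (by simp)
    have l23 : Submodule.span (ZMod 2) {h1, c2} < Submodule.span (ZMod 2) {h1, c2, c3} := by
      refine lt_of_le_of_ne (Submodule.span_mono ?_) fun h => hc3 ?_
      · intro x hx; simp at hx ⊢; tauto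
      · rw [h]; exact Submodule.subset_span (by simp)
    have l34 : Submodule.span (ZMod 2) {h1, c2, c3} < Submodule.span (ZMod 2) S := by
      refine lt_of_le_of_ne (Submodule.span_mono ?_) fun h => hc4 ?_
      · intro x hx; simp [hS] at hx ⊢; tauto
      · rw [h]; exact Submodule.subset_span (by simp [hS])
    have f12 := Submodule.finrank_lt_finrank_of_lt l12
    have f23 := Submodule.finrank_lt_finrank_of_lt l23
    have f34 := Submodule.finrank_lt_finrank_of_lt l34
    omega
  -- the key injectivity
  set f : Fin 8 → ZMod 2 × ZMod 2 × ZMod 2 := fun i => (c2 i, c3 i, c4 i) with hf_def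
  have hinj : Function.Injective f := by
    intro i j hij
    by_contra hne
    have hagree : ∀ α ∈ C, α i = α j := by
      rw [← hspan]
      intro α hα
      induction hα using Submodule.span_induction with
      | mem x hx =>
        rcases hx with rfl | rfl | rfl | rfl
        · rfl
        · exact congrArg (Prod.fst) hij
        · exact congrArg (Prod.fst ∘ Prod.snd) hij
        · exact congrArg (Prod.snd ∘ Prod.snd) hij
      | zero => rfl
      | add x y hx hy ihx ihy => simp [ihx, ihy]
      | smul a x hx ihx => simp [ihx]
    set e : Fin 8 → ZMod 2 := fun k => if k = i ∨ k = j then 1 else 0 with he_def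
    have heC : e ∈ C := by
      rw [hsd]
      intro α hα
      have h1' : ∑ k, α k * e k = ∑ k ∈ ({i, j} : Finset (Fin 8)), α k := by
        rw [Finset.sum_congr rfl (fun k _ => show α k * e k = if k = i ∨ k = j then α k else 0
          by simp [he_def, mul_ite])]
        rw [← Finset.sum_filter]
        congr 1
        ext k; simp
      rw [h1', Finset.sum_pair hne, hagree α hα, CharTwo.add_self_eq_zero]
    have hwt : wt e = 2 := by
      have hfe : (Finset.univ.filter fun k => e k ≠ 0) = {i, j} := by
        ext k
        by_cases hk : k = i ∨ k = j <;> simp [he_def, hk] <;> tauto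
      rw [wt, hfe, Finset.card_pair hne]
    have := hde e heC
    rw [hwt] at this
    omega
  have hfbij : Function.Bijective f :=
    (Fintype.bijective_iff_injective_and_card f).2 ⟨hinj, by simp⟩
  set g : Fin 8 → ZMod 2 × ZMod 2 × ZMod 2 := fun j => (h2 j, h3 j, h4 j) with hg_def
  have hgbij : Function.Bijective g := by decide
  refine ⟨(Equiv.ofBijective g hgbij).trans (Equiv.ofBijective f hfbij).symm, ?_⟩
  set π := (Equiv.ofBijective g hgbij).trans (Equiv.ofBijective f hfbij).symm with hπ
  have hfπ : ∀ j, f (π j) = g j := fun j =>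
    Equiv.ofBijective_apply_symm_apply f hfbij (g j)
  have e1 : LinearMap.funLeft (ZMod 2) (ZMod 2) ⇑π h1 = h1 := rfl
  have e2 : LinearMap.funLeft (ZMod 2) (ZMod 2) ⇑π c2 = h2 :=
    funext fun j => congrArg Prod.fst (hfπ j)
  have e3 : LinearMap.funLeft (ZMod 2) (ZMod 2) ⇑π c3 = h3 :=
    funext fun j => congrArg (Prod.fst ∘ Prod.snd) (hfπ j)
  have e4 : LinearMap.funLeft (ZMod 2) (ZMod 2) ⇑π c4 = h4 :=
    funext fun j => congrArg (Prod.snd ∘ Prod.snd) (hfπ j)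
  rw [← hspan, Submodule.map_span, hS]
  rw [Set.image_insert_eq, Set.image_insert_eq, Set.image_insert_eq, Set.image_singleton,
    e1, e2, e3, e4]
  rfl
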